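/- arXiv:2005.11273 — 3 statements merged into one kernel-verified Lean document; each statement's English description precedes it below -/
import Mathlib

section
/- For d ≥ 1, define the d² rank-one positive semidefinite d×d matrices B_{π(a,b)}: B = e_a e_aᵀ if a = b, B = ½(e_a + e_b)(e_a + e_b)ᵀ if a < b, and B = ½(e_a − e_b)(e_a − e_b)ᵀ if a > b, where π(a,b) = a + (d−1)b. Then this collection forms a frame for the space of d×d symmetric matrices with frame bounds 1 and d: for every symmetric M, ‖M‖_F² ≤ Σ_{k=1}^{d²} ⟨B_k, M⟩² ≤ d·‖M‖_F². -/
open Matrix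

/-- Trace inner product `⟨A, B⟩ = tr(Aᵀ B)`. -/
def ip {m n : Type*} [Fintype m] [Fintype n] (A B : Matrix m n ℝ) : ℝ :=
  (Aᵀ * B).trace

/-- Frobenius norm. -/
noncomputable def frobeniusNorm {m n : Type*} [Fintype m] [Fintype n]
    (M : Matrix m n ℝ) : ℝ :=
  Real.sqrt ((Mᵀ * M).trace)

/-- The frame matrices `B_{π(a,b)}`. -/
noncomputable def frameB (d : ℕ) (a b : Fin d) : Matrix (Fin d) (Fin d) ℝ :=
  if a = b then Matrix.vecMulVec (Pi.single a 1) (Pi.single a 1)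
  else if a < b then
    (1 / 2 : ℝ) • Matrix.vecMulVec (Pi.single a 1 + Pi.single b 1) (Pi.single a 1 + Pi.single b 1)
  else
    (1 / 2 : ℝ) • Matrix.vecMulVec (Pi.single a 1 - Pi.single b 1) (Pi.single a 1 - Pi.single b 1)


lemma ip_vecMulVec {d : ℕ} (u v : Fin d → ℝ) (M : Matrix (Fin d) (Fin d) ℝ) :
    ip (Matrix.vecMulVec u v) M = ∑ i, ∑ j, u i * v j * M i j := by
  simp only [ip, Matrix.trace, Matrix.mul_apply, Matrix.vecMulVec_apply, Matrix.diag,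
    Matrix.transpose_apply]
  exact Finset.sum_comm

lemma ip_frame_aux {d : ℕ} (a b : Fin d) (M : Matrix (Fin d) (Fin d) ℝ) :
    (∑ i, ∑ j, (Pi.single a 1 : Fin d → ℝ) i * (Pi.single b 1 : Fin d → ℝ) j * M i j) = M a b := by
  simp [Pi.single_apply]

lemma ip_smul {d : ℕ} (c : ℝ) (A M : Matrix (Fin d) (Fin d) ℝ) :
    ip (c • A) M = c * ip A M := by
  simp [ip, Matrix.transpose_smul, Matrix.smul_mul, Matrix.trace_smul, smul_eq_mul]


lemma sum_expand_add {d : ℕ} (u v : Fin d → ℝ) (M : Matrix (Fin d) (Fin d) ℝ) :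
    (∑ i, ∑ j, (u + v) i * (u + v) j * M i j)
      = (∑ i, ∑ j, u i * u j * M i j) + (∑ i, ∑ j, u i * v j * M i j)
      + ((∑ i, ∑ j, v i * u j * M i j) + (∑ i, ∑ j, v i * v j * M i j)) := by
  have : ∀ i : Fin d, ∀ j : Fin d, (u + v) i * (u + v) j * M i j
      = u i * u j * M i j + u i * v j * M i j + (v i * u j * M i j + v i * v j * M i j) := by
    intro i j; simp only [Pi.add_apply]; ring
  simp only [this, Finset.sum_add_distrib]

lemma sum_expand_sub {d : ℕ} (u v : Fin d → ℝ) (M : Matrix (Fin d) (Fin d) ℝ) :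
    (∑ i, ∑ j, (u - v) i * (u - v) j * M i j)
      = (∑ i, ∑ j, u i * u j * M i j) - (∑ i, ∑ j, u i * v j * M i j)
      - ((∑ i, ∑ j, v i * u j * M i j) - (∑ i, ∑ j, v i * v j * M i j)) := by
  have : ∀ i : Fin d, ∀ j : Fin d, (u - v) i * (u - v) j * M i j
      = u i * u j * M i j - u i * v j * M i j - (v i * u j * M i j - v i * v j * M i j) := by
    intro i j; simp only [Pi.sub_apply]; ring
  simp only [this, Finset.sum_sub_distrib]

lemma ip_frameB {d : ℕ} (a b : Fin d) (M : Matrix (Fin d) (Fin d) ℝ) (hM : M.IsSymm) :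
    ip (frameB d a b) M =
      if a = b then M a a
      else if a < b then (M a a + M b b) / 2 + M a b
      else (M a a + M b b) / 2 - M a b := by
  have hba : M b a = M a b := by
    have h := hM; rw [Matrix.IsSymm] at h
    calc M b a = Mᵀ a b := rfl
      _ = M a b := by rw [h]
  unfold frameB
  split_ifs with h1 h2
  · rw [ip_vecMulVec]; exact ip_frame_aux a a M
  · rw [ip_smul, ip_vecMulVec, sum_expand_add]
    simp only [ip_frame_aux]
    rw [hba]; ring
  · rw [ip_smul, ip_vecMulVec, sum_expand_sub]
    simp only [ip_frame_aux]
    rw [hba]; ring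


lemma frob_sq {d : ℕ} (M : Matrix (Fin d) (Fin d) ℝ) :
    Real.sqrt ((Mᵀ * M).trace) ^ 2 = ∑ i, ∑ j, (M i j) ^ 2 := by
  have htr : (Mᵀ * M).trace = ∑ i, ∑ j, (M i j) ^ 2 := by
    simp only [Matrix.trace, Matrix.mul_apply, Matrix.diag, Matrix.transpose_apply, sq]
    exact Finset.sum_comm
  rw [htr, Real.sq_sqrt]
  positivity


/-- The `d²` matrices `B_{π(a,b)}` form a frame for the symmetric `d×d` matrices with
frame bounds `1` and `d`. -/
theorem frameB_frame_bounds (d : ℕ) (hd : 1 ≤ d)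
    (M : Matrix (Fin d) (Fin d) ℝ) (hM : M.IsSymm) :
    frobeniusNorm M ^ 2 ≤ ∑ a : Fin d, ∑ b : Fin d, (ip (frameB d a b) M) ^ 2 ∧
    ∑ a : Fin d, ∑ b : Fin d, (ip (frameB d a b) M) ^ 2 ≤ (d : ℝ) * frobeniusNorm M ^ 2 := by
  have hba : ∀ a b : Fin d, M b a = M a b := by
    intro a b
    have h := hM; rw [Matrix.IsSymm] at h
    calc M b a = Mᵀ a b := rfl
      _ = M a b := by rw [h]
  have hfrob : frobeniusNorm M ^ 2 = ∑ i, ∑ j, (M i j) ^ 2 := frob_sq M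
  set h : Fin d → Fin d → ℝ := fun a b =>
    if a = b then M a a ^ 2 else ((M a a + M b b) / 2) ^ 2 + M a b ^ 2 with hh
  -- step 1 : sum of f² equals sum of h
  have key : ∀ a b : Fin d,
      ip (frameB d a b) M ^ 2 + ip (frameB d b a) M ^ 2 = h a b + h b a := by
    intro a b
    rw [ip_frameB a b M hM, ip_frameB b a M hM]
    simp only [hh]
    rcases lt_trichotomy a b with hlt | heq | hgt
    · rw [if_neg (ne_of_lt hlt), if_pos hlt, if_neg (ne_of_gt hlt), if_neg (not_lt.2 hlt.le),
        if_neg (ne_of_lt hlt), if_neg (ne_of_gt hlt), hba a b]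
      ring
    · subst heq; simp
    · rw [if_neg (ne_of_gt hgt), if_neg (not_lt.2 hgt.le), if_neg (ne_of_lt hgt), if_pos hgt,
        if_neg (ne_of_gt hgt), if_neg (ne_of_lt hgt), hba a b]
      ring
  have hsum_swap : ∀ g : Fin d → Fin d → ℝ,
      (∑ a : Fin d, ∑ b : Fin d, g b a) = ∑ a : Fin d, ∑ b : Fin d, g a b :=
    fun g => Finset.sum_comm
  have step1 : (∑ a : Fin d, ∑ b : Fin d, ip (frameB d a b) M ^ 2)
      = ∑ a : Fin d, ∑ b : Fin d, h a b := by
    have h2 : 2 * (∑ a : Fin d, ∑ b : Fin d, ip (frameB d a b) M ^ 2)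
        = 2 * (∑ a : Fin d, ∑ b : Fin d, h a b) := by
      calc 2 * (∑ a : Fin d, ∑ b : Fin d, ip (frameB d a b) M ^ 2)
          = (∑ a : Fin d, ∑ b : Fin d, ip (frameB d a b) M ^ 2)
            + (∑ a : Fin d, ∑ b : Fin d, ip (frameB d b a) M ^ 2) := by
            rw [hsum_swap (fun a b => ip (frameB d a b) M ^ 2)]; ring
        _ = ∑ a : Fin d, ∑ b : Fin d,
              (ip (frameB d a b) M ^ 2 + ip (frameB d b a) M ^ 2) := by
            rw [← Finset.sum_add_distrib]
            exact Finset.sum_congr rfl fun a _ => (Finset.sum_add_distrib).symm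
        _ = ∑ a : Fin d, ∑ b : Fin d, (h a b + h b a) := by
            exact Finset.sum_congr rfl fun a _ => Finset.sum_congr rfl fun b _ => key a b
        _ = (∑ a : Fin d, ∑ b : Fin d, h a b) + (∑ a : Fin d, ∑ b : Fin d, h b a) := by
            rw [← Finset.sum_add_distrib]
            exact Finset.sum_congr rfl fun a _ => (Finset.sum_add_distrib)
        _ = 2 * (∑ a : Fin d, ∑ b : Fin d, h a b) := by
            rw [hsum_swap (fun a b => h a b)]; ring
    linarith
  -- abbreviations
  set T : ℝ := ∑ i, ∑ j, (M i j) ^ 2 with hT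
  set D : ℝ := ∑ a, (M a a) ^ 2 with hD
  have hDT : D ≤ T := by
    apply Finset.sum_le_sum
    intro a _
    exact Finset.single_le_sum (f := fun j => (M a j) ^ 2)
      (fun j _ => sq_nonneg _) (Finset.mem_univ a)
  constructor
  · rw [hfrob, step1]
    apply Finset.sum_le_sum; intro a _
    apply Finset.sum_le_sum; intro b _
    simp only [hh]
    by_cases hab : a = b
    · subst hab; simp
    · rw [if_neg hab]; nlinarith [sq_nonneg ((M a a + M b b) / 2)]
  · rw [hfrob, step1]
    have bound : (∑ a : Fin d, ∑ b : Fin d, h a b)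
        ≤ ∑ a : Fin d, ∑ b : Fin d,
            ((M a a ^ 2 + M b b ^ 2) / 2 + (if a = b then 0 else M a b ^ 2)) := by
      apply Finset.sum_le_sum; intro a _
      apply Finset.sum_le_sum; intro b _
      simp only [hh]
      by_cases hab : a = b
      · subst hab; simp
      · rw [if_neg hab, if_neg hab]; nlinarith [sq_nonneg (M a a - M b b)]
    have split : (∑ a : Fin d, ∑ b : Fin d,
        ((M a a ^ 2 + M b b ^ 2) / 2 + (if a = b then 0 else M a b ^ 2)))
        = (d : ℝ) * D + (T - D) := by
      have e1 : ∀ a : Fin d, ∀ b : Fin d,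
          ((M a a ^ 2 + M b b ^ 2) / 2 + (if a = b then 0 else M a b ^ 2))
          = M a a ^ 2 / 2 + M b b ^ 2 / 2
            + (M a b ^ 2 - (if a = b then M a b ^ 2 else 0)) := by
        intro a b; by_cases hab : a = b
        · subst hab; simp
        · simp only [if_neg hab, sub_zero]; ring
      simp only [e1, Finset.sum_add_distrib, Finset.sum_sub_distrib]
      have s1 : (∑ a : Fin d, ∑ _b : Fin d, M a a ^ 2 / 2) = (d : ℝ) * D / 2 := by
        simp only [Finset.sum_const, Finset.card_univ, Fintype.card_fin, nsmul_eq_mul, hD,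
          Finset.mul_sum, Finset.sum_div]
        exact Finset.sum_congr rfl fun a _ => by ring
      have s2 : (∑ a : Fin d, ∑ b : Fin d, M b b ^ 2 / 2) = (d : ℝ) * D / 2 := by
        rw [hsum_swap (fun a b => M a a ^ 2 / 2)]
        exact s1
      have s3 : (∑ a : Fin d, ∑ b : Fin d, (if a = b then M a b ^ 2 else 0)) = D := by
        rw [hD]
        refine Finset.sum_congr rfl fun a _ => ?_
        rw [Finset.sum_ite_eq (Finset.univ) a (fun b => M a b ^ 2)]
        simp
      rw [s1, s2, s3, ← hT]
      ring
    have hd1 : (1 : ℝ) ≤ (d : ℝ) := by exact_mod_cast hd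
    calc (∑ a : Fin d, ∑ b : Fin d, h a b)
        ≤ (d : ℝ) * D + (T - D) := le_of_le_of_eq bound split
      _ ≤ (d : ℝ) * T := by nlinarith
end

section
/- Comparison lemma for matrix differential inequalities: Let φ, ψ : [0,1] → S^d (symmetric d×d matrices) be differentiable on (0,1), with φ'(t) ⪯ F(t, φ(t)), φ(0) ⪯ u, ψ'(t) ⪰ G(t, ψ(t)), ψ(0) ⪰ v, where u ⪯ v and F, G : [0,1]×S^d → S^d satisfy F(t, x) ⪯ G(t, y) whenever x ⪯ y, and G is Lipschitz in its second argument with integrable rate L(t): ‖G(t,x) − G(t,y)‖ ≤ L(t)‖x − y‖. Then φ(t) − u ⪯ ψ(t) − v for all t ∈ [0,1]. -/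
/-!
Put `W = (ψ - v) - (φ - u)`, so that `W 0 ⪰ 0`. Splitting
`W' = (ψ' - G ψ) + (G ψ - G (ψ + M)) + (G (ψ + M) - F φ) + (F φ - φ')`
shows that `W t ⪰ -M` forces `W' t ⪰ -|L t| M`: the first and last terms are `⪰ 0` by the
differential inequalities, the third because `ψ + M - φ = W + (v - u) + M ⪰ 0`, and the second
has spectral norm at most `|L t| M`. If `W a ⪰ 0` and `∫_a^b |L| < 1`, let `-M < 0` be the minimum
of `xᵀ W t x` over `t ∈ [a, b]`, `|x| = 1`, attained at `(t₀, x₀)`; integrating the drift bound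
along `x₀` gives `-M ≥ -M ∫_a^{t₀} |L| > -M`. Continuous induction then covers `[0, 1]`.
-/

open Matrix

/-- Spectral norm: largest singular value. -/
noncomputable def matSpectralNorm {m n : Type*} [Fintype m] [Fintype n] [DecidableEq n]
    (M : Matrix m n ℝ) : ℝ :=
  ⨆ i, Real.sqrt ((show (Mᵀ * M).IsHermitian by
    simpa using Matrix.isHermitian_conjTranspose_mul_self M).eigenvalues i)

lemma Matrix.isHermitian_transpose_mul_self {m n : Type*} [Fintype m] (M : Matrix m n ℝ) :
    (Mᵀ * M).IsHermitian := by
  simpa using isHermitian_conjTranspose_mul_self M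

section SpectralNorm

variable {m n : Type*} [Fintype m] [Fintype n] [DecidableEq n]

lemma matSpectralNorm_nonneg (M : Matrix m n ℝ) : 0 ≤ matSpectralNorm M :=
  Real.iSup_nonneg fun _ => Real.sqrt_nonneg _

lemma eigenvalues_transpose_mul_self_le_matSpectralNorm_sq (M : Matrix m n ℝ) (i : n) :
    (isHermitian_transpose_mul_self M).eigenvalues i ≤ matSpectralNorm M ^ 2 := by
  have hle : √((isHermitian_transpose_mul_self M).eigenvalues i) ≤ matSpectralNorm M :=
    le_ciSup (f := fun j => √((isHermitian_transpose_mul_self M).eigenvalues j))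
      (Set.finite_range _).bddAbove i
  have hnonneg := (posSemidef_conjTranspose_mul_self M).eigenvalues_nonneg i
  calc _ = √((isHermitian_transpose_mul_self M).eigenvalues i) ^ 2 :=
        (Real.sq_sqrt hnonneg).symm
    _ ≤ _ := by gcongr

lemma matSpectralNorm_le {M : Matrix m n ℝ} {c : ℝ} (hc : 0 ≤ c)
    (h : ∀ i, (isHermitian_transpose_mul_self M).eigenvalues i ≤ c ^ 2) :
    matSpectralNorm M ≤ c :=
  Real.iSup_le (fun i => (Real.sqrt_le_sqrt (h i)).trans_eq (Real.sqrt_sq hc)) hc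

lemma matSpectralNorm_smul_one_le (c : ℝ) : matSpectralNorm (c • 1 : Matrix n n ℝ) ≤ |c| := by
  refine matSpectralNorm_le (abs_nonneg c) fun i => ?_
  have : Nonempty n := ⟨i⟩
  have hspec :=
    (isHermitian_transpose_mul_self (c • 1 : Matrix n n ℝ)).eigenvalues_mem_spectrum_real i
  generalize (isHermitian_transpose_mul_self (c • 1 : Matrix n n ℝ)).eigenvalues i = e at hspec ⊢
  rw [show (c • 1 : Matrix n n ℝ)ᵀ * (c • 1) = algebraMap ℝ _ (|c| ^ 2) by
    rw [sq_abs, Algebra.algebraMap_eq_smul_one, transpose_smul, transpose_one, smul_mul_smul_comm,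
      one_mul, sq], spectrum.scalar_eq] at hspec
  exact hspec.le

end SpectralNorm

section QuadraticForm

variable {n : Type*} [Fintype n]

open scoped MatrixOrder in
lemma Matrix.IsHermitian.dotProduct_mulVec_le [DecidableEq n] {H : Matrix n n ℝ}
    (hH : H.IsHermitian) {c : ℝ} (hc : ∀ i, hH.eigenvalues i ≤ c) (x : n → ℝ) :
    x ⬝ᵥ H *ᵥ x ≤ c * (x ⬝ᵥ x) := by
  have hle : H ≤ algebraMap ℝ (Matrix n n ℝ) c := by
    refine le_algebraMap_of_spectrum_le fun r hr => ?_
    rw [hH.spectrum_real_eq_range_eigenvalues] at hr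
    obtain ⟨i, rfl⟩ := hr
    exact hc i
  simpa [Algebra.algebraMap_eq_smul_one, sub_mulVec, smul_mulVec] using
    (le_iff.mp hle).dotProduct_mulVec_nonneg x

lemma mulVec_dotProduct_mulVec_le [DecidableEq n] (N : Matrix n n ℝ) (x : n → ℝ) :
    (N *ᵥ x) ⬝ᵥ (N *ᵥ x) ≤ matSpectralNorm N ^ 2 * (x ⬝ᵥ x) := by
  have := (isHermitian_transpose_mul_self N).dotProduct_mulVec_le
    (eigenvalues_transpose_mul_self_le_matSpectralNorm_sq N) x
  rwa [← mulVec_mulVec, dotProduct_mulVec, vecMul_transpose] at this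

lemma abs_dotProduct_mulVec_le [DecidableEq n] (N : Matrix n n ℝ) (x : n → ℝ) :
    |x ⬝ᵥ N *ᵥ x| ≤ matSpectralNorm N * (x ⬝ᵥ x) := by
  have hx : 0 ≤ x ⬝ᵥ x := dotProduct_self_star_nonneg x
  have hcs : (x ⬝ᵥ N *ᵥ x) ^ 2 ≤ (x ⬝ᵥ x) * ((N *ᵥ x) ⬝ᵥ (N *ᵥ x)) := by
    simpa only [dotProduct, sq] using Finset.sum_mul_sq_le_sq_mul_sq Finset.univ x (N *ᵥ x)
  refine abs_le_of_sq_le_sq ?_ (mul_nonneg (matSpectralNorm_nonneg N) hx)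
  calc (x ⬝ᵥ N *ᵥ x) ^ 2 ≤ (x ⬝ᵥ x) * (matSpectralNorm N ^ 2 * (x ⬝ᵥ x)) :=
        hcs.trans (mul_le_mul_of_nonneg_left (mulVec_dotProduct_mulVec_le N x) hx)
    _ = (matSpectralNorm N * (x ⬝ᵥ x)) ^ 2 := by ring

lemma mul_dotProduct_self_le_of_forall_dotProduct_self_eq_one {A : Matrix n n ℝ} {c : ℝ}
    (h : ∀ x, x ⬝ᵥ x = 1 → c ≤ x ⬝ᵥ A *ᵥ x) (y : n → ℝ) : c * (y ⬝ᵥ y) ≤ y ⬝ᵥ A *ᵥ y := by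
  rcases (dotProduct_self_star_nonneg y).eq_or_lt' with hy | hy
  · simp [dotProduct_self_eq_zero.mp hy]
  set r := √(y ⬝ᵥ y)
  have hr : 0 < r := Real.sqrt_pos.mpr hy
  have hrr : r * r = y ⬝ᵥ y := Real.mul_self_sqrt hy.le
  have hunit := h (r⁻¹ • y) (by
    rw [smul_dotProduct, dotProduct_smul, smul_eq_mul, smul_eq_mul, ← hrr]; field_simp)
  rw [mulVec_smul, smul_dotProduct, dotProduct_smul, smul_eq_mul, smul_eq_mul] at hunit
  calc c * (y ⬝ᵥ y) ≤ r * r * (r⁻¹ * (r⁻¹ * (y ⬝ᵥ A *ᵥ y))) := by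
        rw [← hrr, mul_comm c]; exact mul_le_mul_of_nonneg_left hunit (by positivity)
    _ = y ⬝ᵥ A *ᵥ y := by field_simp

lemma isCompact_setOf_dotProduct_self_eq_one : IsCompact {x : n → ℝ | x ⬝ᵥ x = 1} := by
  refine (isCompact_closedBall (0 : n → ℝ) 1).of_isClosed_subset
    (isClosed_eq (continuous_id.dotProduct continuous_id) continuous_const) fun x (hx : _ = _) => ?_
  refine mem_closedBall_zero_iff.mpr <| (pi_norm_le_iff_of_nonneg zero_le_one).mpr fun i => ?_
  have hi : x i * x i ≤ x ⬝ᵥ x := Finset.single_le_sum (f := fun j => x j * x j)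
    (fun j _ => mul_self_nonneg _) (Finset.mem_univ i)
  rw [Real.norm_eq_abs]
  exact abs_le_of_sq_le_sq (by rw [sq, one_pow]; exact hi.trans_eq hx) zero_le_one

variable {α : Type*} [TopologicalSpace α] {W : α → Matrix n n ℝ} {s : Set α}

lemma ContinuousOn.dotProduct_mulVec_self (hW : ContinuousOn W s) :
    ContinuousOn (fun p : α × (n → ℝ) => p.2 ⬝ᵥ W p.1 *ᵥ p.2) (s ×ˢ Set.univ) :=
  (continuous_snd.dotProduct (continuous_fst.matrix_mulVec continuous_snd)).comp_continuousOn
    ((hW.comp continuousOn_fst fun _ hp => hp.1).prodMk continuousOn_snd)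

lemma ContinuousOn.dotProduct_mulVec (hW : ContinuousOn W s) (x : n → ℝ) :
    ContinuousOn (fun t => x ⬝ᵥ W t *ᵥ x) s :=
  hW.dotProduct_mulVec_self.comp (continuousOn_id.prodMk continuousOn_const)
    fun _ ht => ⟨ht, Set.mem_univ x⟩

lemma hasDerivAt_dotProduct_mulVec {W : ℝ → Matrix n n ℝ} {W' : Matrix n n ℝ} {t : ℝ}
    (h : ∀ i j, HasDerivAt (fun s => W s i j) (W' i j) t) (x : n → ℝ) :
    HasDerivAt (fun s => x ⬝ᵥ W s *ᵥ x) (x ⬝ᵥ W' *ᵥ x) t := by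
  simp only [dotProduct, mulVec]
  exact HasDerivAt.fun_sum fun i _ =>
    (HasDerivAt.fun_sum fun j _ => (h i j).mul_const (x j)).const_mul (x i)

end QuadraticForm

section Comparison

open Set MeasureTheory Topology

variable {n : Type*} [Fintype n] {W W' : ℝ → Matrix n n ℝ} {ℓ : ℝ → ℝ} {a b : ℝ}

theorem dotProduct_mulVec_nonneg_of_integral_lt_one
    (hW : ContinuousOn W (Icc a b))
    (hW' : ∀ t ∈ Ioo a b, ∀ x, HasDerivAt (fun s => x ⬝ᵥ W s *ᵥ x) (x ⬝ᵥ W' t *ᵥ x) t)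
    (hℓ : ∀ t, 0 ≤ ℓ t) (hℓint : IntervalIntegrable ℓ volume a b) (hℓ1 : ∫ t in a..b, ℓ t < 1)
    (hdrift : ∀ t ∈ Ioo a b, ∀ M, 0 ≤ M → (∀ y, -M * (y ⬝ᵥ y) ≤ y ⬝ᵥ W t *ᵥ y) →
      ∀ x, -(ℓ t * M) * (x ⬝ᵥ x) ≤ x ⬝ᵥ W' t *ᵥ x)
    (ha : ∀ x, 0 ≤ x ⬝ᵥ W a *ᵥ x) :
    ∀ t ∈ Icc a b, ∀ x, 0 ≤ x ⬝ᵥ W t *ᵥ x := by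
  suffices h : ∀ t ∈ Icc a b, ∀ x, x ⬝ᵥ x = 1 → 0 ≤ x ⬝ᵥ W t *ᵥ x from
    fun t ht y => by simpa using mul_dotProduct_self_le_of_forall_dotProduct_self_eq_one (h t ht) y
  by_contra! ⟨t₁, ht₁, x₁, hx₁, hneg⟩
  set K := Icc a b ×ˢ {x : n → ℝ | x ⬝ᵥ x = 1}
  obtain ⟨⟨t₀, x₀⟩, ⟨ht₀, hx₀ : x₀ ⬝ᵥ x₀ = 1⟩, hmin⟩ :=
    (isCompact_Icc.prod isCompact_setOf_dotProduct_self_eq_one).exists_isMinOn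
      (show K.Nonempty from ⟨(t₁, x₁), ht₁, hx₁⟩)
      (hW.dotProduct_mulVec_self.mono (prod_mono le_rfl (subset_univ _)))
  set M := -(x₀ ⬝ᵥ W t₀ *ᵥ x₀)
  have hM : 0 < M := neg_pos.mpr ((hmin (show (t₁, x₁) ∈ K from ⟨ht₁, hx₁⟩)).trans_lt hneg)
  have hlow : ∀ s ∈ Icc a b, ∀ y, -M * (y ⬝ᵥ y) ≤ y ⬝ᵥ W s *ᵥ y := fun s hs =>
    mul_dotProduct_self_le_of_forall_dotProduct_self_eq_one fun x hx => by
      simpa [M] using hmin (show (s, x) ∈ K from ⟨hs, hx⟩)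
  have hat₀ : a < t₀ := ht₀.1.lt_of_ne <| by
    rintro rfl; linarith [ha x₀]
  have hℓt₀ : IntervalIntegrable ℓ volume a t₀ := hℓint.mono_set <| by
    rw [uIcc_of_le hat₀.le, uIcc_of_le (ht₀.1.trans ht₀.2)]; exact Icc_subset_Icc_right ht₀.2
  have hftc : ∫ s in a..t₀, -(ℓ s * M) ≤ x₀ ⬝ᵥ W t₀ *ᵥ x₀ - x₀ ⬝ᵥ W a *ᵥ x₀ :=
    intervalIntegral.integral_le_sub_of_hasDeriv_right_of_le hat₀.le
      ((hW.dotProduct_mulVec x₀).mono (Icc_subset_Icc_right ht₀.2))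
      (fun s hs => (hW' s ⟨hs.1, hs.2.trans_le ht₀.2⟩ x₀).hasDerivWithinAt)
      (((intervalIntegrable_iff_integrableOn_Icc_of_le hat₀.le).mp hℓt₀).mul_const M).neg
      fun s hs => by
        simpa [hx₀] using hdrift s ⟨hs.1, hs.2.trans_le ht₀.2⟩ M hM.le
          (hlow s ⟨hs.1.le, hs.2.le.trans ht₀.2⟩) x₀
  have hint : ∫ s in a..t₀, ℓ s ≤ ∫ s in a..b, ℓ s :=
    intervalIntegral.integral_mono_interval le_rfl hat₀.le ht₀.2
      (Filter.Eventually.of_forall hℓ) hℓint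
  rw [intervalIntegral.integral_neg, intervalIntegral.integral_mul_const] at hftc
  nlinarith [ha x₀]

theorem dotProduct_mulVec_nonneg_of_drift
    (hW : ContinuousOn W (Icc a b))
    (hW' : ∀ t ∈ Ioo a b, ∀ x, HasDerivAt (fun s => x ⬝ᵥ W s *ᵥ x) (x ⬝ᵥ W' t *ᵥ x) t)
    (hℓ : ∀ t, 0 ≤ ℓ t) (hℓint : IntervalIntegrable ℓ volume a b)
    (hdrift : ∀ t ∈ Ioo a b, ∀ M, 0 ≤ M → (∀ y, -M * (y ⬝ᵥ y) ≤ y ⬝ᵥ W t *ᵥ y) →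
      ∀ x, -(ℓ t * M) * (x ⬝ᵥ x) ≤ x ⬝ᵥ W' t *ᵥ x)
    (ha : ∀ x, 0 ≤ x ⬝ᵥ W a *ᵥ x) :
    ∀ t ∈ Icc a b, ∀ x, 0 ≤ x ⬝ᵥ W t *ᵥ x := by
  set S := ⋂ x : n → ℝ, (fun t => x ⬝ᵥ W t *ᵥ x) ⁻¹' Ici 0
  have hclosed : IsClosed (S ∩ Icc a b) := by
    rw [inter_comm, inter_iInter]
    exact isClosed_iInter fun x =>
      (hW.dotProduct_mulVec x).preimage_isClosed_of_isClosed isClosed_Icc isClosed_Ici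
  have hstep : ∀ t ∈ S ∩ Ico a b, ∀ y ∈ Ioi t, (S ∩ Ioc t y).Nonempty := by
    rintro t ⟨htS, hta, htb⟩ y hy
    have hcont : ContinuousWithinAt (fun z => ∫ s in t..z, ℓ s) (Icc t b) t :=
      intervalIntegral.continuousWithinAt_primitive (measure_singleton t) <| by
        rw [min_self, max_eq_right htb.le]
        exact hℓint.mono_set <| by
          rw [uIcc_of_le htb.le, uIcc_of_le (hta.trans htb.le)]; exact Icc_subset_Icc_left hta
    have hsmall : ∀ᶠ z in 𝓝[>] t, ∫ s in t..z, ℓ s < 1 := by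
      rw [← nhdsWithin_Ioc_eq_nhdsGT htb]
      refine nhdsWithin_mono _ Ioc_subset_Icc_self (hcont.eventually (gt_mem_nhds ?_))
      simp
    obtain ⟨z, hz1, htz, hzy⟩ := (hsmall.and (Ioc_mem_nhdsGT (lt_min hy htb))).exists
    have hzb : z ≤ b := hzy.trans (min_le_right _ _)
    have hsub : Icc t z ⊆ Icc a b := Icc_subset_Icc hta hzb
    refine ⟨z, mem_iInter.mpr fun x => ?_, htz, hzy.trans (min_le_left _ _)⟩
    exact dotProduct_mulVec_nonneg_of_integral_lt_one (hW.mono hsub)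
      (fun s hs => hW' s (Ioo_subset_Ioo hta hzb hs)) hℓ
      (hℓint.mono_set (by rwa [uIcc_of_le htz.le, uIcc_of_le (hta.trans (htz.le.trans hzb))]))
      hz1 (fun s hs => hdrift s (Ioo_subset_Ioo hta hzb hs)) (mem_iInter.mp htS) z
      (right_mem_Icc.mpr htz.le) x
  intro t ht x
  exact mem_iInter.mp (hclosed.Icc_subset_of_forall_exists_gt (mem_iInter.mpr ha) hstep ht) x

end Comparison

section Drift

variable {n : Type*} [Fintype n] [DecidableEq n]

lemma neg_matSpectralNorm_mul_le_dotProduct_mulVec {A B C P Q : Matrix n n ℝ}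
    (hP : (A - P).PosSemidef) (hQ : (Q - B).PosSemidef) (hAC : (C - A).PosSemidef)
    (x : n → ℝ) : -(matSpectralNorm (B - C) * (x ⬝ᵥ x)) ≤ x ⬝ᵥ (Q - P) *ᵥ x := by
  have hsplit : Q - P = (Q - B) + (B - C) + (C - A) + (A - P) := by abel
  have h1 := hQ.dotProduct_mulVec_nonneg x
  have h2 := hAC.dotProduct_mulVec_nonneg x
  have h3 := hP.dotProduct_mulVec_nonneg x
  simp only [star_trivial] at h1 h2 h3
  rw [hsplit, add_mulVec, add_mulVec, add_mulVec, dotProduct_add, dotProduct_add, dotProduct_add]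
  linarith [neg_abs_le (x ⬝ᵥ (B - C) *ᵥ x), abs_dotProduct_mulVec_le (B - C) x]

lemma comparison_drift_bound {F G : Matrix n n ℝ → Matrix n n ℝ} {p q p' q' u v : Matrix n n ℝ}
    {L M : ℝ} (hp : p.IsSymm) (hq : q.IsSymm) (hM : 0 ≤ M)
    (hp' : (F p - p').PosSemidef) (hq' : (q' - G q).PosSemidef) (huv : (v - u).PosSemidef)
    (hFG : ∀ x y, (y - x).PosSemidef → (G y - F x).PosSemidef)
    (hLip : ∀ x y, matSpectralNorm (G x - G y) ≤ L * matSpectralNorm (x - y))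
    (hlow : ∀ y, -M * (y ⬝ᵥ y) ≤ y ⬝ᵥ ((q - v) - (p - u)) *ᵥ y) (x : n → ℝ) :
    -(|L| * M) * (x ⬝ᵥ x) ≤ x ⬝ᵥ (q' - p') *ᵥ x := by
  have hshift : (q + M • 1 - p).PosSemidef := by
    refine .of_dotProduct_mulVec_nonneg ?_ fun y => ?_
    · exact isHermitian_iff_isSymm.mpr ((hq.add (isSymm_one.smul M)).sub hp)
    · have h := huv.dotProduct_mulVec_nonneg y
      simp only [star_trivial] at h ⊢
      have hsplit : q + M • 1 - p = ((q - v) - (p - u)) + (v - u) + M • 1 := by abel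
      rw [hsplit, add_mulVec, add_mulVec, dotProduct_add, dotProduct_add, smul_mulVec,
        one_mulVec, dotProduct_smul, smul_eq_mul]
      linarith [hlow y]
  have hnorm : matSpectralNorm (G q - G (q + M • 1)) ≤ |L| * M :=
    calc matSpectralNorm (G q - G (q + M • 1))
        ≤ L * matSpectralNorm ((-M) • 1 : Matrix n n ℝ) := by
          simpa [neg_smul] using hLip q (q + M • 1)
      _ ≤ |L| * |-M| := mul_le_mul (le_abs_self L) (matSpectralNorm_smul_one_le _)
          (matSpectralNorm_nonneg _) (abs_nonneg L)
      _ = |L| * M := by rw [abs_neg, abs_of_nonneg hM]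
  have hx : 0 ≤ x ⬝ᵥ x := dotProduct_self_star_nonneg x
  calc -(|L| * M) * (x ⬝ᵥ x) ≤ -(matSpectralNorm (G q - G (q + M • 1)) * (x ⬝ᵥ x)) := by
        rw [neg_mul]; exact neg_le_neg (mul_le_mul_of_nonneg_right hnorm hx)
    _ ≤ x ⬝ᵥ (q' - p') *ᵥ x :=
        neg_matSpectralNorm_mul_le_dotProduct_mulVec hp' hq' (hFG p _ hshift) x

end Drift

/-- Comparison lemma for matrix differential inequalities. -/
theorem matrix_ode_comparison
    (d : ℕ) (φ ψ φ' ψ' : ℝ → Matrix (Fin d) (Fin d) ℝ)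
    (F G : ℝ → Matrix (Fin d) (Fin d) ℝ → Matrix (Fin d) (Fin d) ℝ)
    (u v : Matrix (Fin d) (Fin d) ℝ) (L : ℝ → ℝ)
    (hφsymm : ∀ t ∈ Set.Icc (0 : ℝ) 1, (φ t).IsSymm)
    (hψsymm : ∀ t ∈ Set.Icc (0 : ℝ) 1, (ψ t).IsSymm)
    (husymm : u.IsSymm) (hvsymm : v.IsSymm)
    (hφcont : ∀ i j, ContinuousOn (fun t => φ t i j) (Set.Icc (0 : ℝ) 1))
    (hψcont : ∀ i j, ContinuousOn (fun t => ψ t i j) (Set.Icc (0 : ℝ) 1))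
    (hφderiv : ∀ t ∈ Set.Ioo (0 : ℝ) 1, ∀ i j, HasDerivAt (fun s => φ s i j) (φ' t i j) t)
    (hψderiv : ∀ t ∈ Set.Ioo (0 : ℝ) 1, ∀ i j, HasDerivAt (fun s => ψ s i j) (ψ' t i j) t)
    (hφineq : ∀ t ∈ Set.Ioo (0 : ℝ) 1, (F t (φ t) - φ' t).PosSemidef)
    (hψineq : ∀ t ∈ Set.Ioo (0 : ℝ) 1, (ψ' t - G t (ψ t)).PosSemidef)
    (hφ0 : (u - φ 0).PosSemidef) (hψ0 : (ψ 0 - v).PosSemidef)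
    (huv : (v - u).PosSemidef)
    (hFG : ∀ t ∈ Set.Icc (0 : ℝ) 1, ∀ x y : Matrix (Fin d) (Fin d) ℝ,
      (y - x).PosSemidef → (G t y - F t x).PosSemidef)
    (hLip : ∀ t ∈ Set.Icc (0 : ℝ) 1, ∀ x y : Matrix (Fin d) (Fin d) ℝ,
      matSpectralNorm (G t x - G t y) ≤ L t * matSpectralNorm (x - y))
    (hLint : IntervalIntegrable L MeasureTheory.volume 0 1) :
    ∀ t ∈ Set.Icc (0 : ℝ) 1, ((ψ t - v) - (φ t - u)).PosSemidef := by
  set W : ℝ → Matrix (Fin d) (Fin d) ℝ := fun t => (ψ t - v) - (φ t - u)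
  have hW : ContinuousOn W (Set.Icc 0 1) := continuousOn_pi.2 fun i => continuousOn_pi.2 fun j =>
    ((hψcont i j).sub continuousOn_const).fun_sub ((hφcont i j).sub continuousOn_const)
  have hW' : ∀ t ∈ Set.Ioo (0 : ℝ) 1, ∀ x,
      HasDerivAt (fun s => x ⬝ᵥ W s *ᵥ x) (x ⬝ᵥ (ψ' t - φ' t) *ᵥ x) t := fun t ht =>
    hasDerivAt_dotProduct_mulVec fun i j =>
      ((hψderiv t ht i j).sub_const (v i j)).fun_sub ((hφderiv t ht i j).sub_const (u i j))
  have hW0 : ∀ x, 0 ≤ x ⬝ᵥ W 0 *ᵥ x := fun x => by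
    have h := (hψ0.add hφ0).dotProduct_mulVec_nonneg x
    rwa [star_trivial, show ψ 0 - v + (u - φ 0) = W 0 by simp only [W]; abel] at h
  have hnonneg := dotProduct_mulVec_nonneg_of_drift hW hW' (fun t => abs_nonneg (L t)) hLint.abs
    (fun t ht M hM hlow => comparison_drift_bound (hφsymm t (Set.Ioo_subset_Icc_self ht))
      (hψsymm t (Set.Ioo_subset_Icc_self ht)) hM (hφineq t ht) (hψineq t ht) huv
      (hFG t (Set.Ioo_subset_Icc_self ht)) (hLip t (Set.Ioo_subset_Icc_self ht)) hlow) hW0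
  intro t ht
  refine .of_dotProduct_mulVec_nonneg ?_ fun x => by simpa using hnonneg t ht x
  exact isHermitian_iff_isSymm.mpr (((hψsymm t ht).sub hvsymm).sub ((hφsymm t ht).sub husymm))
end

section
/- Concavity duality bound for the MMSE: Let f : S₊^d → ℝ be a differentiable concave function that is non-decreasing in the Loewner order, and let g : S₊^d → ℝ be a concave function with superdifferentials ∂g. Then for all R ∈ S₊^d and symmetric R̃ with R + R̃ ⪰ 0, ⟨R̃, ∇f(R)⟩ ≥ max_{U ∈ ∂g(R + R̃)} ⟨R̃, U⟩ − δ, where δ = 2(|f(R) − g(R)| + |f(R+R̃) − g(R+R̃)|). -/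
open Matrix

/-- Superdifferential of a concave function `g` at `R` on the PSD cone. -/
def superdiff {d : ℕ} (g : Matrix (Fin d) (Fin d) ℝ → ℝ) (R : Matrix (Fin d) (Fin d) ℝ) :
    Set (Matrix (Fin d) (Fin d) ℝ) :=
  {U | ∀ R' : Matrix (Fin d) (Fin d) ℝ, R'.PosSemidef → g R' - g R ≤ ip (R' - R) U}

/-- Concavity duality bound: for differentiable concave order-nondecreasing `f` with gradient
`Df`, concave `g`, and all PSD `R` and symmetric `R̃` with `R + R̃ ⪰ 0`,
`⟨R̃, ∇f(R)⟩ ≥ max_{U ∈ ∂g(R+R̃)} ⟨R̃, U⟩ − δ`. -/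
theorem concave_duality_bound
    (d : ℕ) (f g : Matrix (Fin d) (Fin d) ℝ → ℝ)
    (Df : Matrix (Fin d) (Fin d) ℝ → Matrix (Fin d) (Fin d) ℝ)
    (hfconc : ConcaveOn ℝ {A : Matrix (Fin d) (Fin d) ℝ | A.PosSemidef} f)
    (hfmono : ∀ A B : Matrix (Fin d) (Fin d) ℝ, A.PosSemidef → B.PosSemidef →
      (B - A).PosSemidef → f A ≤ f B)
    (hfgrad : ∀ R : Matrix (Fin d) (Fin d) ℝ, R.PosSemidef →
      ∀ R' : Matrix (Fin d) (Fin d) ℝ, R'.PosSemidef → f R' - f R ≤ ip (R' - R) (Df R))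
    (hgconc : ConcaveOn ℝ {A : Matrix (Fin d) (Fin d) ℝ | A.PosSemidef} g) :
    ∀ R : Matrix (Fin d) (Fin d) ℝ, R.PosSemidef →
      ∀ Rt : Matrix (Fin d) (Fin d) ℝ, Rt.IsSymm → (R + Rt).PosSemidef →
      ∀ U ∈ superdiff g (R + Rt),
        ip Rt U - 2 * (|f R - g R| + |f (R + Rt) - g (R + Rt)|) ≤ ip Rt (Df R) := by
  intro R hR Rt hRt hRRt U hU
  have h1 : g R - g (R + Rt) ≤ ip (R - (R + Rt)) U := hU R hR
  have he : R - (R + Rt) = -Rt := by abel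
  have hneg : ip (R - (R + Rt)) U = -(ip Rt U) := by
    rw [he]; simp [ip, Matrix.transpose_neg, Matrix.neg_mul]
  rw [hneg] at h1
  have h2 : f (R + Rt) - f R ≤ ip ((R + Rt) - R) (Df R) := hfgrad R hR (R + Rt) hRRt
  have he2 : (R + Rt) - R = Rt := by abel
  rw [he2] at h2
  have hA : g (R + Rt) - f (R + Rt) ≤ |f (R + Rt) - g (R + Rt)| := by
    rw [abs_sub_comm]; exact le_abs_self _
  have hB : f R - g R ≤ |f R - g R| := le_abs_self _
  have habs1 : (0:ℝ) ≤ |f R - g R| := abs_nonneg _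
  have habs2 : (0:ℝ) ≤ |f (R + Rt) - g (R + Rt)| := abs_nonneg _
  linarith
end
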